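/- Let W be a 3-dimensional vector space over a square-dense ordered field F, and let χ be a non-degenerate, non-symmetric bilinear form on W such that χ(u, u) > 0 for some u ∈ W. Then there exist vectors v₁, v₂ ∈ W with χ(v₁, v₁) > 0, χ(v₂, v₂) > 0, and χ(v₁, v₂) = 0. -/

import Mathlib

/-!
Diagonalise the symmetric part of `χ` in a basis `e₀, e₁, e₂` with `χ e₀ e₀ > 0`; off the
diagonal `χ` is then antisymmetric on the basis. If `χ w v = -χ v w` and `χ v v > 0`, the vector
`χ v w • v - χ v v • w` is killed by `χ v` and has value `χ v v * (χ v w ^ 2 + χ v v * χ w w)`,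
so it suffices to make the last factor positive. This is immediate if a second diagonal entry is
positive. Otherwise take `v = x • e₀ + y • e₁` and `w = e₂`, or the same with `e₁, e₂` swapped:
square-density gives `x` making `χ v v` positive but as small as we please, which wins as soon as
`χ v w` is kept away from `0`. Non-symmetry and non-degeneracy make one of the two choices work.
-/

open Module

def IsSquareDense (F : Type*) [Field F] [LinearOrder F] : Prop :=
  ∀ a b : F, 0 < a → a < b → ∃ c : F, a < c ^ 2 ∧ c ^ 2 < b

section OrderedField

variable {F : Type*} [Field F] [LinearOrder F] [IsStrictOrderedRing F]

lemma IsSquareDense.exists_sq_mul_add_mem_Ioo (hsd : IsSquareDense F) {D E ε : F} (hD : 0 < D)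
    (hE : E < 0) (hε : 0 < ε) : ∃ x : F, 0 < x ^ 2 * D + E ∧ x ^ 2 * D + E < ε := by
  obtain ⟨x, hlo, hhi⟩ := hsd (-E / D) ((ε - E) / D) (div_pos (neg_pos.2 hE) hD)
    (div_lt_div_of_pos_right (by linarith) hD)
  rw [div_lt_iff₀ hD] at hlo
  rw [lt_div_iff₀ hD] at hhi
  exact ⟨x, by linarith, by linarith⟩

lemma IsSquareDense.exists_pos_sq_add_mul_pos (hsd : IsSquareDense F) {D₁ D₂ D₃ b c : F}
    (h₁ : 0 < D₁) (h₂ : D₂ ≤ 0) (h₃ : D₃ ≤ 0) (hbc : b ≠ 0 ∨ c ≠ 0) (h₂₃ : D₂ < 0 ∨ D₃ = 0) :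
    ∃ x y : F, 0 < x ^ 2 * D₁ + y ^ 2 * D₂ ∧
      0 < (x * b + y * c) ^ 2 + (x ^ 2 * D₁ + y ^ 2 * D₂) * D₃ := by
  rcases h₂.lt_or_eq with h₂ | h₂
  · have hR : 0 < b ^ 2 * -D₂ + c ^ 2 * D₁ := by
      rcases hbc with hb | hc
      · have : 0 < b ^ 2 := by positivity
        nlinarith [sq_nonneg c]
      · have : 0 < c ^ 2 := by positivity
        nlinarith [sq_nonneg b]
    -- `ε` keeps `(x ^ 2 * D₁ + D₂) * -D₃` below `(b ^ 2 * -D₂ + c ^ 2 * D₁) / D₁`, a lower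
    -- bound for `(x * b + c) ^ 2` once the sign of `x` makes the cross term nonnegative.
    obtain ⟨x, hq, hqε⟩ := hsd.exists_sq_mul_add_mem_Ioo h₁ h₂
      (div_pos hR (mul_pos h₁ (by linarith : (0 : F) < 1 - D₃)))
    rw [lt_div_iff₀ (mul_pos h₁ (by linarith))] at hqε
    rcases le_total 0 (x * b * c) with hs | hs
    · refine ⟨x, 1, by simpa using hq, ?_⟩
      nlinarith
    · refine ⟨-x, 1, by simpa using hq, ?_⟩
      nlinarith
  · obtain rfl : D₃ = 0 := h₂₃.resolve_left (by simp [h₂])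
    subst h₂
    by_cases hb : b = 0
    · have hc : c ≠ 0 := hbc.resolve_left (not_not.2 hb)
      refine ⟨1, 1, by simpa using h₁, ?_⟩
      simp only [hb, mul_zero, add_zero, one_mul, zero_add]
      positivity
    · refine ⟨1, 0, by simpa using h₁, ?_⟩
      simp only [one_mul, zero_mul, mul_zero, add_zero]
      positivity

end OrderedField

namespace LinearMap

section CommRing

variable {R M : Type*} [CommRing R] [AddCommGroup M] [Module R M] {B : M →ₗ[R] M →ₗ[R] R}

lemma apply_smul_add_smul_self {f g : M} (hfg : B g f = -B f g) (x y : R) :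
    B (x • f + y • g) (x • f + y • g) = x ^ 2 * B f f + y ^ 2 * B g g := by
  simp only [map_add, map_smul, add_apply, smul_apply, smul_eq_mul, hfg]
  ring

lemma exists_apply_basis_ne_flip (hns : ∃ u v : M, B u v ≠ B v u) {ι : Type*}
    (b : Basis ι R M) : ∃ p q, B (b p) (b q) ≠ B (b q) (b p) := by
  by_contra! h
  obtain ⟨u, v, huv⟩ := hns
  have hflip : B = B.flip := b.ext fun p ↦ b.ext fun q ↦ h p q
  exact huv (congr_fun₂ hflip u v)

lemma exists_apply_basis_ne_zero [Nontrivial R] (hnd : ∀ u : M, (∀ v : M, B u v = 0) → u = 0)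
    {ι : Type*} (b : Basis ι R M) (p : ι) : ∃ q, B (b p) (b q) ≠ 0 := by
  by_contra! h
  have hp : B (b p) = 0 := b.ext fun q ↦ by simp [h q]
  exact b.ne_zero p (hnd _ fun v ↦ by simp [hp])

end CommRing

variable {F W : Type*} [Field F] [LinearOrder F] [IsStrictOrderedRing F] [AddCommGroup W]
  [Module F W]

def HasPositiveOrthogonalPair (χ : W →ₗ[F] W →ₗ[F] F) : Prop :=
  ∃ v₁ v₂ : W, 0 < χ v₁ v₁ ∧ 0 < χ v₂ v₂ ∧ χ v₁ v₂ = 0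

variable {χ : W →ₗ[F] W →ₗ[F] F}

lemma hasPositiveOrthogonalPair_of_sq_add_mul_pos {v w : W} (hv : 0 < χ v v)
    (hvw : χ w v = -χ v w) (h : 0 < χ v w ^ 2 + χ v v * χ w w) :
    HasPositiveOrthogonalPair χ := by
  refine ⟨v, χ v w • v - χ v v • w, hv, ?_, ?_⟩
  · have : χ (χ v w • v - χ v v • w) (χ v w • v - χ v v • w) =
        χ v v * (χ v w ^ 2 + χ v v * χ w w) := by
      simp only [map_sub, map_smul, sub_apply, smul_apply, smul_eq_mul, hvw]
      ring
    rw [this]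
    positivity
  · simp only [map_sub, map_smul, smul_eq_mul]
    ring

lemma hasPositiveOrthogonalPair_of_plane (hsd : IsSquareDense F) {f g h : W}
    (hfg : χ g f = -χ f g) (hfh : χ h f = -χ f h) (hgh : χ h g = -χ g h)
    (hf : 0 < χ f f) (hg : χ g g ≤ 0) (hh : χ h h ≤ 0) (hfgh : χ f h ≠ 0 ∨ χ g h ≠ 0)
    (hdiag : χ g g < 0 ∨ χ h h = 0) :
    HasPositiveOrthogonalPair χ := by
  obtain ⟨x, y, hq, hpos⟩ := hsd.exists_pos_sq_add_mul_pos hf hg hh hfgh hdiag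
  have hv : χ (x • f + y • g) h = x * χ f h + y * χ g h := by
    simp only [map_add, map_smul, add_apply, smul_apply, smul_eq_mul]
  refine hasPositiveOrthogonalPair_of_sq_add_mul_pos (v := x • f + y • g) (w := h)
    (by rwa [apply_smul_add_smul_self hfg]) ?_ (by rwa [apply_smul_add_smul_self hfg, hv])
  rw [hv]
  simp only [map_add, map_smul, smul_eq_mul, hfh, hgh]
  ring

lemma hasPositiveOrthogonalPair_of_triple (hsd : IsSquareDense F) {f g h : W}
    (hfg : χ g f = -χ f g) (hfh : χ h f = -χ f h) (hgh : χ h g = -χ g h)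
    (hf : 0 < χ f f) (hg : χ g g ≤ 0) (hh : χ h h ≤ 0)
    (hns : χ f g ≠ 0 ∨ χ f h ≠ 0 ∨ χ g h ≠ 0)
    (hg₀ : χ g g = 0 → χ f g ≠ 0 ∨ χ g h ≠ 0) (hh₀ : χ h h = 0 → χ f h ≠ 0 ∨ χ g h ≠ 0) :
    HasPositiveOrthogonalPair χ := by
  by_cases H : (χ f h ≠ 0 ∨ χ g h ≠ 0) ∧ (χ g g < 0 ∨ χ h h = 0)
  · exact hasPositiveOrthogonalPair_of_plane hsd hfg hfh hgh hf hg hh H.1 H.2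
  have hh' : χ h h < 0 := hh.lt_of_ne fun h0 ↦ H ⟨hh₀ h0, Or.inr h0⟩
  refine hasPositiveOrthogonalPair_of_plane hsd hfh hfg (by rw [hgh, neg_neg]) hf hh hg ?_
    (Or.inl hh')
  rw [hgh, neg_ne_zero]
  by_contra! hfg₀
  have hg' : χ g g < 0 := hg.lt_of_ne fun h0 ↦ by simpa [hfg₀] using hg₀ h0
  exact H ⟨by simpa [hfg₀] using hns, Or.inl hg'⟩

lemma hasPositiveOrthogonalPair_of_basis (hsd : IsSquareDense F)
    (hnd : ∀ u : W, (∀ v : W, χ u v = 0) → u = 0) (hns : ∃ u v : W, χ u v ≠ χ v u)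
    (b : Basis (Fin 3) F W) (hb : Pairwise fun p q ↦ χ (b q) (b p) = -χ (b p) (b q))
    (h₀ : 0 < χ (b 0) (b 0)) :
    HasPositiveOrthogonalPair χ := by
  have h01 := hb (show (0 : Fin 3) ≠ 1 by decide)
  have h02 := hb (show (0 : Fin 3) ≠ 2 by decide)
  have h12 := hb (show (1 : Fin 3) ≠ 2 by decide)
  by_cases h₁ : 0 < χ (b 1) (b 1)
  · exact hasPositiveOrthogonalPair_of_sq_add_mul_pos h₀ h01 (by positivity)
  by_cases h₂ : 0 < χ (b 2) (b 2)
  · exact hasPositiveOrthogonalPair_of_sq_add_mul_pos h₀ h02 (by positivity)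
  refine hasPositiveOrthogonalPair_of_triple hsd h01 h02 h12 h₀ (not_lt.1 h₁) (not_lt.1 h₂)
    ?_ (fun h0 ↦ ?_) (fun h0 ↦ ?_)
  · by_contra! h
    obtain ⟨p, q, hpq⟩ := exists_apply_basis_ne_flip hns b
    fin_cases p <;> fin_cases q <;> simp [h01, h02, h12, h.1, h.2.1, h.2.2] at hpq
  · by_contra! h
    obtain ⟨q, hq⟩ := exists_apply_basis_ne_zero hnd b 1
    fin_cases q <;> simp [h01, h0, h.1, h.2] at hq
  · by_contra! h
    obtain ⟨q, hq⟩ := exists_apply_basis_ne_zero hnd b 2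
    fin_cases q <;> simp [h02, h12, h0, h.1, h.2] at hq

lemma exists_basis_pairwise_skew_apply_zero_pos {n : ℕ} (hdim : finrank F W = n + 1)
    (hpos : ∃ u : W, 0 < χ u u) :
    ∃ b : Basis (Fin (n + 1)) F W,
      (Pairwise fun p q ↦ χ (b q) (b p) = -χ (b p) (b q)) ∧ 0 < χ (b 0) (b 0) := by
  have : FiniteDimensional F W := Module.finite_of_finrank_eq_succ hdim
  have : Invertible (2 : F) := invertibleOfNonzero two_ne_zero
  let Q := BilinMap.toQuadraticMap χ
  obtain ⟨b, hb⟩ := BilinForm.exists_orthogonal_basis (QuadraticForm.associated_isSymm F Q)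
  have hskew : Pairwise fun p q ↦ χ (b q) (b p) = -χ (b p) (b q) := fun p q hpq ↦ by
    have := hb hpq
    rw [Function.onFun, QuadraticMap.associated_toQuadraticMap, Module.End.smul_def,
      QuadraticMap.half_moduleEnd_apply_eq_half_smul, smul_eq_zero] at this
    linear_combination this.resolve_left (by norm_num)
  obtain ⟨i, hi⟩ : ∃ i, 0 < χ (b i) (b i) := by
    by_contra! h
    obtain ⟨u, hu⟩ := hpos
    have hQ := congr_arg (· (b.repr u)) (QuadraticMap.basisRepr_eq_of_iIsOrtho Q b hb)
    simp only [QuadraticMap.basisRepr_apply, QuadraticMap.weightedSumSquares_apply, b.sum_repr,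
      smul_eq_mul, Q, BilinMap.toQuadraticMap_apply] at hQ
    refine hu.not_ge (hQ ▸ Finset.sum_nonpos fun i _ ↦ ?_)
    exact mul_nonpos_of_nonpos_of_nonneg (h i) (mul_self_nonneg _)
  let e := (finCongr hdim).trans (Equiv.swap (finCongr hdim i) 0)
  refine ⟨b.reindex e, fun p q hpq ↦ ?_, ?_⟩
  · simpa using hskew (e.symm.injective.ne hpq)
  · simpa [e] using hi

end LinearMap

/-- In dimension 3 over a square-dense ordered field, a non-degenerate non-symmetric
bilinear form taking a positive value on the diagonal admits two positive vectors
`v₁, v₂` with `χ(v₁, v₂) = 0`. -/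
theorem stmt16 {F W : Type*} [Field F] [LinearOrder F] [IsStrictOrderedRing F] [AddCommGroup W] [Module F W]
    (hsd : ∀ a b : F, 0 < a → a < b → ∃ c : F, a < c ^ 2 ∧ c ^ 2 < b)
    (hdim : Module.finrank F W = 3)
    (χ : W →ₗ[F] W →ₗ[F] F)
    (hnd : ∀ u : W, (∀ v : W, χ u v = 0) → u = 0)
    (hnsymm : ∃ u v : W, χ u v ≠ χ v u)
    (hpos : ∃ u : W, 0 < χ u u) :
    ∃ v₁ v₂ : W, 0 < χ v₁ v₁ ∧ 0 < χ v₂ v₂ ∧ χ v₁ v₂ = 0 := by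
  obtain ⟨b, hb, h₀⟩ := LinearMap.exists_basis_pairwise_skew_apply_zero_pos hdim hpos
  exact LinearMap.hasPositiveOrthogonalPair_of_basis hsd hnd hnsymm b hb h₀
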